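/- arXiv:2304.02318 — 3 statements merged into one kernel-verified Lean document; each statement's English description precedes it below -/
import Mathlib

section
/- Let h be a function analytic in a neighborhood of the closed unit disk in ℂ and let p be a polynomial with leading coefficient α. Then |α · h(0)| ≤ sup_{|z|=1} |h(z) p(z)|. -/
/-!
Let `q(z) = zᵈ · conj (p (1 / conj z))` be the conjugate-reciprocal of `p`, obtained by conjugating
and reversing the coefficients. Then `q(0) = conj α` and `|q| = |p|` on the unit circle, so the
maximum modulus principle applied to the holomorphic function `h q` gives
`|α h(0)| = |h(0) q(0)| ≤ sup_{|z|=1} |h(z) q(z)| = sup_{|z|=1} |h(z) p(z)|`.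
-/

open Polynomial Metric ComplexConjugate

namespace Polynomial

theorem eval_reverse_inv_mul_pow {K : Type*} [Field K] (f : K[X]) {x : K} (hx : x ≠ 0) :
    f.reverse.eval x⁻¹ * x ^ f.natDegree = f.eval x := by
  let := invertibleOfNonzero hx
  simpa only [eval₂_id, invOf_eq_inv] using eval₂_reverse_mul_pow (RingHom.id K) x f

section ConjReverse

variable {K : Type*} [RCLike K]

noncomputable def conjReverse (p : K[X]) : K[X] := (p.map (starRingEnd K)).reverse

theorem eval_zero_conjReverse (p : K[X]) : p.conjReverse.eval 0 = conj p.leadingCoeff := by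
  rw [conjReverse, ← coeff_zero_eq_eval_zero, coeff_zero_reverse,
    leadingCoeff_map_of_injective (RingHom.injective _)]

theorem norm_eval_conjReverse (p : K[X]) {z : K} (hz : ‖z‖ = 1) :
    ‖p.conjReverse.eval z‖ = ‖p.eval z‖ := by
  have hz' : conj z ≠ 0 := by simp [← norm_ne_zero_iff, hz]
  have hrev := eval_reverse_inv_mul_pow (p.map (starRingEnd K)) hz'
  rw [eval_map_apply, ← RCLike.inv_eq_conj hz, inv_inv] at hrev
  simpa [conjReverse, hz] using congrArg norm hrev

end ConjReverse

end Polynomial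

theorem Complex.norm_le_iSup_norm_sphere {F : Type*} [NormedAddCommGroup F] [NormedSpace ℂ F]
    {f : ℂ → F} {c : ℂ} {r : ℝ} (hr : r ≠ 0) (hf : DiffContOnCl ℂ f (ball c r)) {w : ℂ}
    (hw : w ∈ closedBall c r) : ‖f w‖ ≤ ⨆ z ∈ sphere c r, ‖f z‖ := by
  have hcont : ContinuousOn (‖f ·‖) (sphere c r) := by
    refine (hf.continuousOn.mono ?_).norm
    rw [closure_ball c hr]
    exact sphere_subset_closedBall
  have hbdd : BddAbove (⋃ z, Set.range fun _ : z ∈ sphere c r ↦ ‖f z‖) :=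
    ((isCompact_sphere c r).bddAbove_image hcont).mono <|
      Set.iUnion_subset fun z ↦ Set.range_subset_iff.2 fun hz ↦ Set.mem_image_of_mem (‖f ·‖) hz
  refine norm_le_of_forall_mem_frontier_norm_le isBounded_ball hf (fun z hz ↦ ?_) ?_
  · rw [frontier_ball c hr] at hz
    exact le_ciSup₂ (f := fun z (_ : z ∈ sphere c r) ↦ ‖f z‖) hbdd z hz
  · rwa [closure_ball c hr]

theorem abs_leadingCoeff_mul_le_sup_sphere_general
    (h : ℂ → ℂ) (U : Set ℂ) (hKU : closedBall (0 : ℂ) 1 ⊆ U)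
    (hh : DifferentiableOn ℂ h U) (p : Polynomial ℂ) :
    ‖p.leadingCoeff * h 0‖ ≤ ⨆ z ∈ sphere (0 : ℂ) 1, ‖h z * p.eval z‖ := by
  have hdiff : DiffContOnCl ℂ (fun z ↦ h z * p.conjReverse.eval z) (ball 0 1) := by
    refine DifferentiableOn.diffContOnCl ?_
    rw [closure_ball 0 one_ne_zero]
    exact (hh.mono hKU).mul p.conjReverse.differentiable.differentiableOn
  have hnorm_sphere : ∀ z ∈ sphere (0 : ℂ) 1,
      ‖h z * p.conjReverse.eval z‖ = ‖h z * p.eval z‖ := fun z hz ↦ by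
    rw [norm_mul, norm_mul, norm_eval_conjReverse p (mem_sphere_zero_iff_norm.1 hz)]
  calc ‖p.leadingCoeff * h 0‖ = ‖h 0 * p.conjReverse.eval 0‖ := by
        rw [eval_zero_conjReverse, norm_mul, norm_mul, RCLike.norm_conj, mul_comm]
    _ ≤ ⨆ z ∈ sphere (0 : ℂ) 1, ‖h z * p.conjReverse.eval z‖ :=
      Complex.norm_le_iSup_norm_sphere one_ne_zero hdiff (mem_closedBall_self zero_le_one)
    _ = ⨆ z ∈ sphere (0 : ℂ) 1, ‖h z * p.eval z‖ :=
      iSup_congr fun z ↦ iSup_congr fun hz ↦ hnorm_sphere z hz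

/-- If `h` is analytic in a neighborhood of the closed unit disk and `p` is a polynomial
with leading coefficient `α`, then `|α · h(0)| ≤ sup_{|z|=1} |h(z) p(z)|`. -/
theorem abs_leadingCoeff_mul_le_sup_sphere
    (h : ℂ → ℂ) (U : Set ℂ) (hU : IsOpen U) (hKU : closedBall (0 : ℂ) 1 ⊆ U)
    (hh : DifferentiableOn ℂ h U) (p : Polynomial ℂ) :
    ‖p.leadingCoeff * h 0‖ ≤ ⨆ z ∈ sphere (0 : ℂ) 1, ‖h z * p.eval z‖ :=
  abs_leadingCoeff_mul_le_sup_sphere_general h U hKU hh p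
end

section
/- Let g ∈ L¹(𝕋) and suppose g(e^{iθ}) = −g(e^{−iθ}) for almost every θ, and for some ρ with ρ/π irrational also g(e^{i(ρ+θ)}) = −g(e^{i(ρ−θ)}) for almost every θ. Then g = 0 almost everywhere on 𝕋. -/
/-! The two reflections compose to the translation by `2ρ`, so `g` is almost everywhere invariant
under an irrational rotation of the circle. Translation by `a` multiplies the `n`-th Fourier
coefficient by `e^{ina}`, which is `≠ 1` for `n ≠ 0`, so every coefficient but the mean vanishes and
`g` is a.e. constant. This uses uniqueness of Fourier coefficients in `L¹`: the functional
`φ ↦ ∫ φ g` vanishes on trigonometric polynomials, hence on all continuous `φ` by Stone–Weierstrass,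
hence on indicators of closed sets by dominated convergence. The first antisymmetry then forces the
constant to be `0`. -/

open MeasureTheory Real
open Filter Topology
open scoped NNReal BoundedContinuousFunction

namespace MeasureTheory

theorem ae_eq_zero_of_forall_integral_smul_eq_zero {X E : Type*} [TopologicalSpace X]
    [HasOuterApproxClosed X] [MeasurableSpace X] [BorelSpace X] [NormedAddCommGroup E]
    [NormedSpace ℝ E] [CompleteSpace E] {μ : Measure X} {f : X → E} (hf : Integrable f μ)
    (h : ∀ φ : X →ᵇ ℝ≥0, ∫ x, (φ x : ℝ) • f x ∂μ = 0) :
    f =ᵐ[μ] 0 := by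
  refine ae_eq_zero_of_forall_setIntegral_isClosed_eq_zero hf fun s hs => ?_
  have hlim : Tendsto (fun n => ∫ x, (hs.apprSeq n x : ℝ) • f x ∂μ) atTop
      (𝓝 (∫ x, s.indicator f x ∂μ)) := by
    refine tendsto_integral_of_dominated_convergence (fun x => ‖f x‖)
      (fun n => ?_) hf.norm (fun n => ae_of_all _ fun x => ?_) (ae_of_all _ fun x => ?_)
    · exact ((NNReal.continuous_coe.comp (hs.apprSeq n).continuous).aestronglyMeasurable).smul
        hf.aestronglyMeasurable
    · rw [norm_smul, Real.norm_of_nonneg (NNReal.coe_nonneg _)]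
      exact mul_le_of_le_one_left (norm_nonneg _)
        (by exact_mod_cast HasOuterApproxClosed.apprSeq_apply_le_one hs n x)
    · have := (NNReal.continuous_coe.tendsto _).comp
        (tendsto_pi_nhds.mp (HasOuterApproxClosed.tendsto_apprSeq hs) x)
      have hind : ((s.indicator (fun _ => (1 : ℝ≥0)) x : ℝ≥0) : ℝ) • f x = s.indicator f x := by
        by_cases hx : x ∈ s <;> simp [hx]
      simpa only [hind, Function.comp_def] using this.smul_const (f x)
  simp only [h, tendsto_const_nhds_iff] at hlim
  rw [← integral_indicator hs.measurableSet, hlim]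

namespace Integrable

variable {X : Type*} [TopologicalSpace X] [CompactSpace X] [MeasurableSpace X]
  [OpensMeasurableSpace X] {μ : Measure X} {f : X → ℂ}

theorem continuousMap_mul (hf : Integrable f μ) (φ : C(X, ℂ)) :
    Integrable (fun x => φ x * f x) μ :=
  hf.bdd_mul φ.continuous.aestronglyMeasurable (ae_of_all _ φ.norm_coe_le_norm)

noncomputable def integralMulCLM (hf : Integrable f μ) : C(X, ℂ) →L[ℂ] ℂ :=
  LinearMap.mkContinuous
    { toFun := fun φ => ∫ x, φ x * f x ∂μ
      map_add' := fun φ ψ => by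
        simp only [ContinuousMap.add_apply, add_mul]
        exact integral_add (hf.continuousMap_mul φ) (hf.continuousMap_mul ψ)
      map_smul' := fun c φ => by
        simp only [ContinuousMap.smul_apply, smul_eq_mul, mul_assoc, RingHom.id_apply]
        exact integral_const_mul c _ }
    (∫ x, ‖f x‖ ∂μ) fun φ => by
      rw [← integral_mul_const]
      refine norm_integral_le_of_norm_le (hf.norm.mul_const _) (ae_of_all _ fun x => ?_)
      rw [norm_mul, mul_comm]
      gcongr
      exact φ.norm_coe_le_norm x

theorem integralMulCLM_apply (hf : Integrable f μ) (φ : C(X, ℂ)) :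
    hf.integralMulCLM φ = ∫ x, φ x * f x ∂μ := rfl

end Integrable

end MeasureTheory

namespace AddCircle

theorem fourier_apply_add {T : ℝ} (n : ℤ) (x y : AddCircle T) :
    fourier n (x + y) = fourier n x * fourier n y := by
  simp only [fourier_apply, smul_add, toCircle_add, Circle.coe_mul]

variable {T : ℝ} [Fact (0 < T)]

theorem fourier_ne_one_of_not_isOfFinAddOrder {a : AddCircle T} (ha : ¬IsOfFinAddOrder a)
    {n : ℤ} (hn : n ≠ 0) : fourier n a ≠ 1 := by
  rw [fourier_apply, Ne, ← Circle.coe_one, Circle.coe_inj, ← toCircle_zero (T := T),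
    (injective_toCircle (Fact.out : 0 < T).ne').eq_iff]
  exact fun h => ha (isOfFinAddOrder_iff_zsmul_eq_zero.mpr ⟨n, hn, h⟩)

theorem fourierCoeff_comp_add_right {E : Type*} [NormedAddCommGroup E] [NormedSpace ℂ E]
    (f : AddCircle T → E) (a : AddCircle T) (n : ℤ) :
    fourierCoeff (fun y => f (y + a)) n = fourier n a • fourierCoeff f n := by
  simp only [fourierCoeff]
  rw [← integral_smul,
    ← integral_add_right_eq_self (fun y => fourier n a • fourier (-n) y • f y) a]
  congr 1; ext y
  have : fourier n a * fourier (-n) a = 1 := by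
    rw [← fourier_add, add_neg_cancel, fourier_zero]
  rw [smul_smul, fourier_apply_add, ← mul_assoc, mul_right_comm, this, one_mul]

theorem fourierCoeff_const (c : ℂ) (n : ℤ) :
    fourierCoeff (fun _ : AddCircle T => c) n = (Pi.single 0 c : ℤ → ℂ) n := by
  have : (fun _ : AddCircle T => c) = c • ⇑(fourier 0 : C(AddCircle T, ℂ)) := by
    ext; simp
  rw [this, fourierCoeff.const_smul, fourierCoeff_fourier]
  rcases eq_or_ne n 0 with rfl | hn <;> simp [*]

theorem ae_eq_zero_of_fourierCoeff_eq_zero {f : AddCircle T → ℂ}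
    (hf : Integrable f haarAddCircle) (h : fourierCoeff f = 0) : f =ᵐ[haarAddCircle] 0 := by
  have hL : hf.integralMulCLM = 0 := by
    refine ContinuousLinearMap.ext_on
      (Submodule.dense_iff_topologicalClosure_eq_top.mpr span_fourier_closure_eq_top) ?_
    rintro _ ⟨n, rfl⟩
    simpa [Integrable.integralMulCLM_apply, fourierCoeff] using congrFun h (-n)
  refine ae_eq_zero_of_forall_integral_smul_eq_zero hf fun φ => ?_
  have := DFunLike.congr_fun hL ⟨fun x => ((φ x : ℝ) : ℂ), by fun_prop⟩
  rw [Integrable.integralMulCLM_apply, zero_apply] at this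
  simpa only [Complex.real_smul, ContinuousMap.coe_mk] using this

theorem ae_eq_fourierCoeff_zero_of_comp_add_ae_eq {f : AddCircle T → ℂ}
    (hf : Integrable f haarAddCircle) {a : AddCircle T} (ha : ¬IsOfFinAddOrder a)
    (h : (fun y => f (y + a)) =ᵐ[haarAddCircle] f) :
    f =ᵐ[haarAddCircle] fun _ => fourierCoeff f 0 := by
  have hcoeff : ∀ n ≠ 0, fourierCoeff f n = 0 := fun n hn => by
    have hfix := fourierCoeff_comp_add_right f a n
    rw [fourierCoeff_congr_ae h, smul_eq_mul] at hfix
    have : (fourier n a - 1) * fourierCoeff f n = 0 := by linear_combination -hfix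
    exact (mul_eq_zero.mp this).resolve_left
      (sub_ne_zero.mpr (fourier_ne_one_of_not_isOfFinAddOrder ha hn))
  have hsub : fourierCoeff (f + fun _ => -fourierCoeff f 0) = 0 := by
    rw [fourierCoeff.add hf (integrable_const _)]
    ext n
    rcases eq_or_ne n 0 with rfl | hn <;> simp [fourierCoeff_const, *]
  filter_upwards [ae_eq_zero_of_fourierCoeff_eq_zero (hf.add (integrable_const _)) hsub] with y hy
  simpa [add_neg_eq_zero] using hy

theorem ae_haarAddCircle : ae (haarAddCircle (T := T)) = ae volume := by
  ext s
  simp [mem_ae_iff, volume_eq_smul_haarAddCircle, (Fact.out : 0 < T)]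

theorem quasiMeasurePreserving_coe :
    Measure.QuasiMeasurePreserving ((↑) : ℝ → AddCircle T) volume volume where
  measurable := AddCircle.measurable_mk'
  absolutelyContinuous := by
    have := (isAddFundamentalDomain_Ioc' (Fact.out : 0 < T) 0).absolutelyContinuous_map
    rwa [(AddCircle.measurePreserving_mk T 0).map_eq] at this

theorem ae_of_ae_coe {p : AddCircle T → Prop} (hp : NullMeasurableSet {y | p y})
    (h : ∀ᵐ x : ℝ, p x) : ∀ᵐ y : AddCircle T, p y := by
  rw [ae_iff, ← Set.compl_ofPred, ← (AddCircle.measurePreserving_mk T 0).measure_preimage hp.compl]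
  exact ae_iff.mp (ae_restrict_of_ae h)

end AddCircle

namespace Function.Periodic

variable {T : ℝ} [Fact (0 < T)]

theorem liftIoc_coe {β : Type*} {f : ℝ → β} (hf : Periodic f T) (a x : ℝ) :
    AddCircle.liftIoc T a f x = f x := by
  change f (AddCircle.equivIoc T a x) = f x
  rw [← hf.lift_coe, ← hf.lift_coe x]
  exact congrArg hf.lift AddCircle.coe_equivIoc

theorem exists_ae_eq_const_of_ae_add_eq {g : ℝ → ℂ} {a : ℝ} (hg : Periodic g T)
    (hint : IntervalIntegrable g volume 0 T) (ha : Irrational (a / T))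
    (h : ∀ᵐ x, g (x + a) = g x) : ∃ c, ∀ᵐ x, g x = c := by
  set G := AddCircle.liftIoc T 0 g
  have hGcoe : ∀ x : ℝ, G x = g x := hg.liftIoc_coe 0
  have hGmem : MemLp G 1 := by
    have : MemLp g 1 (volume.restrict (Set.Ioc 0 (0 + T))) := by
      rw [zero_add, memLp_one_iff_integrable]
      exact hint.1
    exact this.memLp_liftIoc
  have hGvol : Integrable G := memLp_one_iff_integrable.mp hGmem
  have hinv : (fun y => G (y + (a : AddCircle T))) =ᵐ[AddCircle.haarAddCircle] G := by
    rw [EventuallyEq, AddCircle.ae_haarAddCircle]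
    refine AddCircle.ae_of_ae_coe ((hGvol.aestronglyMeasurable.comp_measurePreserving
      (measurePreserving_add_right _ _)).nullMeasurableSet_eq_fun hGvol.aestronglyMeasurable) ?_
    filter_upwards [h] with x hx
    rw [← AddCircle.coe_add, hGcoe, hGcoe, hx]
  have ha' : ¬IsOfFinAddOrder (a : AddCircle T) :=
    AddCircle.not_isOfFinAddOrder_iff_forall_rat_ne_div.mpr fun q => (ha.ne_rat q).symm
  have hconst := AddCircle.ae_eq_fourierCoeff_zero_of_comp_add_ae_eq
    (memLp_one_iff_integrable.mp hGmem.haarAddCircle) ha' hinv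
  rw [EventuallyEq, AddCircle.ae_haarAddCircle] at hconst
  refine ⟨fourierCoeff G 0, ?_⟩
  filter_upwards [AddCircle.quasiMeasurePreserving_coe.ae hconst] with x hx
  rwa [hGcoe] at hx

end Function.Periodic

/-- If `g ∈ L¹(𝕋)` satisfies the two reflection antisymmetries
`g(θ) = −g(−θ)` a.e. and `g(ρ+θ) = −g(ρ−θ)` a.e., with `ρ/π` irrational,
then `g = 0` a.e. -/
theorem ae_zero_of_two_antisymmetries {g : ℝ → ℂ} (hper : Function.Periodic g (2 * π))
    (hint : IntervalIntegrable g volume 0 (2 * π)) {ρ : ℝ} (hρ : Irrational (ρ / π))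
    (hsym0 : ∀ᵐ θ : ℝ, g θ = -g (-θ))
    (hsymρ : ∀ᵐ θ : ℝ, g (ρ + θ) = -g (ρ - θ)) :
    ∀ᵐ θ : ℝ, g θ = 0 := by
  have : Fact (0 < 2 * π) := ⟨by positivity⟩
  have hperiod : ∀ᵐ x, g (x + 2 * ρ) = g x := by
    filter_upwards [(measurePreserving_add_right volume ρ).quasiMeasurePreserving.ae hsymρ,
      hsym0] with x hρx h0x
    rw [show ρ + (x + ρ) = x + 2 * ρ by ring, show ρ - (x + ρ) = -x by ring] at hρx
    rw [hρx, h0x]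
  obtain ⟨c, hc⟩ := hper.exists_ae_eq_const_of_ae_add_eq hint
    (by rwa [mul_div_mul_left ρ π two_ne_zero]) hperiod
  have hc_neg : ∀ᵐ x, g (-x) = c :=
    (Measure.measurePreserving_neg volume).quasiMeasurePreserving.ae hc
  obtain ⟨x, hx, hnx, h0⟩ := (hc.and (hc_neg.and hsym0)).exists
  have hc0 : c = 0 := by linear_combination (h0 - hx - hnx) / 2
  filter_upwards [hc] with x hx using hx.trans hc0
end

section
/- Let Ω = (0,T) × (0,L) ⊂ ℝ² be an open rectangle with T, L > 0 and T/L irrational. If f ∈ C²(Ω) ∩ C¹(Ω̄) satisfies the wave equation ∂²f/∂t² − ∂²f/∂x² = 0 in Ω and f = 0 on the boundary ∂Ω, then f = 0 on Ω̄. -/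
/-!
Since `∂ₜ² f = ∂ₓ² f`, the derivative of `(∂ₜ ± ∂ₓ) f` in the characteristic direction `(1, ∓1)`
vanishes, so `(∂ₜ + ∂ₓ) f = Φ(t + x)` and `(∂ₜ - ∂ₓ) f` is constant on the lines `t - x = const`.
At a boundary point one of `∂ₜ f`, `∂ₓ f` vanishes, so there `‖(∂ₜ + ∂ₓ) f‖ = ‖(∂ₜ - ∂ₓ) f‖`;
following a line `t - x = const` from the right or top edge to the bottom or left edge gives
`‖Φ(T + s)‖ = ‖Φ |T - s|‖` and `‖Φ(L + s)‖ = ‖Φ |L - s|‖`. Hence `s ↦ ‖Φ(‖s‖)‖`, with `‖s‖` the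
distance from `s` to `2(T + L)ℤ`, is symmetric about `0`, `T` and `L`, so it has the periods `2T`
and `2L`. For irrational `T / L` these generate a dense subgroup of `ℝ`, so by continuity it is
constant, equal to `‖Φ 0‖ = 0` as both tangential derivatives vanish at the corner. Thus `∇f = 0`
on the closed rectangle and `f = f(0, 0) = 0`.
-/

open Set Function Filter Topology

theorem eq_of_hasDerivAt_zero_of_continuousOn_Icc {F : Type*} [NormedAddCommGroup F]
    [NormedSpace ℝ F] {g : ℝ → F} {a b : ℝ} (hab : a < b) (hg : ContinuousOn g (Icc a b))
    (hg' : ∀ x ∈ Ioo a b, HasDerivAt g 0 x) : g a = g b := by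
  have hmid : (a + b) / 2 ∈ Ioo a b := ⟨by linarith, by linarith⟩
  have hIoo : EqOn g (fun _ => g ((a + b) / 2)) (Ioo a b) := fun x hx =>
    isOpen_Ioo.is_const_of_deriv_eq_zero isPreconnected_Ioo
      (fun y hy => (hg' y hy).differentiableAt.differentiableWithinAt)
      (fun y hy => (hg' y hy).deriv) hx hmid
  have hIcc : EqOn g (fun _ => g ((a + b) / 2)) (Icc a b) :=
    hIoo.of_subset_closure hg continuousOn_const Ioo_subset_Icc_self
      (closure_Ioo hab.ne).superset
  rw [hIcc (left_mem_Icc.2 hab.le), hIcc (right_mem_Icc.2 hab.le)]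

theorem Continuous.eq_of_periodic_of_dense_closure {G α : Type*} [AddGroup G]
    [TopologicalSpace G] [ContinuousAdd G] [TopologicalSpace α] [T2Space α] {N : G → α}
    (hN : Continuous N) {S : Set G} (hS : ∀ a ∈ S, Periodic N a)
    (hdense : Dense (AddSubgroup.closure S : Set G)) (x y : G) : N x = N y := by
  have hper : ∀ a ∈ AddSubgroup.closure S, Periodic N a := fun a ha =>
    AddSubgroup.closure_induction hS (fun _ => by rw [add_zero])
      (fun _ _ _ _ ha hb => ha.add_period hb) (fun _ _ ha => ha.neg) ha
  have hshift : (fun a => N (x + a)) = fun _ => N x :=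
    (hN.comp (continuous_const_add x)).ext_on hdense continuous_const
      fun a ha => by simpa [add_comm] using hper a ha x
  simpa using (congrFun hshift (-x + y)).symm

theorem periodic_comp_norm_addCircle {α : Type*} {T L : ℝ} (hT : 0 ≤ T) (hL : 0 ≤ L)
    (hTL : 0 < T + L) {n : ℝ → α} (hTs : ∀ s ∈ Icc 0 L, n (T + s) = n |T - s|)
    (hLs : ∀ s ∈ Icc 0 T, n (L + s) = n |L - s|) :
    Periodic (fun s : ℝ => n ‖(s : AddCircle (2 * (T + L)))‖) (2 * T) := by
  set P := 2 * (T + L)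
  have hP : 0 < P := by positivity
  have hnorm : ∀ x : ℝ, |x| ≤ T + L → ‖(x : AddCircle P)‖ = |x| := fun x hx =>
    (AddCircle.norm_coe_eq_abs_iff P hP.ne').2 (by rw [abs_of_pos hP]; linarith)
  have hhalf : ∀ y ∈ Icc 0 (T + L),
      n ‖(T : AddCircle P) + y‖ = n ‖(T : AddCircle P) - y‖ := by
    rintro y ⟨hy0, hy⟩
    rw [← AddCircle.coe_add, ← AddCircle.coe_sub]
    rcases le_total y L with hyL | hyL
    · rw [hnorm _ (by rw [abs_le]; constructor <;> linarith),
        hnorm _ (by rw [abs_le]; constructor <;> linarith), abs_of_nonneg (by linarith)]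
      exact hTs y ⟨hy0, hyL⟩
    · set s := T + L - y
      rw [show T + y = -(L + s) + P by ring, AddCircle.coe_add_period, AddCircle.coe_neg,
        norm_neg, show T - y = -(L - s) by ring, AddCircle.coe_neg, norm_neg,
        hnorm _ (by rw [abs_le]; constructor <;> linarith),
        hnorm _ (by rw [abs_le]; constructor <;> linarith), abs_of_nonneg (by linarith)]
      exact hLs s ⟨by linarith, by linarith⟩
  have hreflect : ∀ θ : AddCircle P, n ‖(T : AddCircle P) + θ‖ = n ‖(T : AddCircle P) - θ‖ := by
    intro θ
    obtain ⟨y, ⟨hy₁, hy₂⟩, rfl⟩ : ∃ y ∈ Icc (-(P / 2)) (-(P / 2) + P), (y : AddCircle P) = θ :=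
      have : Fact (0 < P) := ⟨hP⟩
      (AddCircle.coe_image_Icc_eq P (-(P / 2))).superset (mem_univ θ)
    rcases le_total 0 y with hy | hy
    · exact hhalf y ⟨hy, by linarith⟩
    · have := hhalf (-y) ⟨by linarith, by linarith⟩
      rwa [AddCircle.coe_neg, sub_neg_eq_add, ← sub_eq_add_neg, eq_comm] at this
  -- the reflections about `T` and about `0` compose to the translation by `2T`
  intro s
  have := hreflect (s + T : ℝ)
  rwa [← AddCircle.coe_add, ← AddCircle.coe_sub, show T + (s + T) = s + 2 * T by ring,
    show T - (s + T) = -s by ring, AddCircle.coe_neg, norm_neg] at this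

theorem openSegment_subset_Ioo_of_ne {a b x y : ℝ} (hx : x ∈ Icc a b) (hy : y ∈ Icc a b)
    (hxy : x ≠ y) : openSegment ℝ x y ⊆ Ioo a b := by
  rw [openSegment_eq_Ioo' hxy]
  exact Ioo_subset_Ioo (le_min hx.1 hy.1) (max_le hx.2 hy.2)

theorem frontier_Ioo_prod_Ioo {a b c d : ℝ} (hab : a < b) (hcd : c < d) :
    frontier (Ioo a b ×ˢ Ioo c d) = Icc a b ×ˢ Icc c d \ Ioo a b ×ˢ Ioo c d := by
  rw [(isOpen_Ioo.prod isOpen_Ioo).frontier_eq, closure_prod_eq, closure_Ioo hab.ne,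
    closure_Ioo hcd.ne]

section

variable {E F : Type*} [NormedAddCommGroup E] [NormedSpace ℝ E] [NormedAddCommGroup F]
  [NormedSpace ℝ F]

theorem ContinuousLinearMap.norm_apply_one_one_eq_norm_apply_one_neg_one
    (φ : ℝ × ℝ →L[ℝ] F) (h : φ (1, 0) = 0 ∨ φ (0, 1) = 0) : ‖φ (1, 1)‖ = ‖φ (1, -1)‖ := by
  have hadd : φ (1, 1) = φ (1, 0) + φ (0, 1) := by rw [← map_add]; norm_num
  have hsub : φ (1, -1) = φ (1, 0) - φ (0, 1) := by rw [← map_sub]; norm_num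
  rcases h with h | h
  · rw [hadd, hsub, h, zero_add, zero_sub, norm_neg]
  · rw [hadd, hsub, h, add_zero, sub_zero]

theorem ContinuousLinearMap.eq_zero_of_apply_one_one_of_apply_one_neg_one
    {φ : ℝ × ℝ →L[ℝ] F} (hadd : φ (1, 1) = 0) (hsub : φ (1, -1) = 0) : φ = 0 := by
  refine ContinuousLinearMap.ext fun v => ?_
  have hv : v = ((v.1 + v.2) / 2) • ((1 : ℝ), (1 : ℝ)) +
      ((v.1 - v.2) / 2) • ((1 : ℝ), (-1 : ℝ)) := by
    ext <;> simp <;> ring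
  rw [hv, map_add, map_smul, map_smul, hadd, hsub]
  simp

theorem HasFDerivWithinAt.apply_eq_zero_of_eqOn_zero {f : E → F} {f' : E →L[ℝ] F}
    {s : Set E} {γ : ℝ → E} {v : E} {I : Set ℝ} {t : ℝ}
    (hf : HasFDerivWithinAt f f' s (γ t)) (hγ : HasDerivWithinAt γ v I t) (hγs : MapsTo γ I s)
    (hI : UniqueDiffWithinAt ℝ I t) (ht : t ∈ I) (hzero : EqOn (f ∘ γ) 0 I) : f' v = 0 :=
  hI.eq_deriv _ (hf.comp_hasDerivWithinAt t hγ hγs)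
    ((hasDerivWithinAt_const t I 0).congr hzero (hzero ht))

theorem deriv_deriv_comp_eq_fderiv_fderiv {f : E → F} {γ : ℝ → E} {v : E} {t : ℝ}
    (hγ : ∀ τ, HasDerivAt γ v τ) (hf : ContDiffAt ℝ 2 f (γ t)) :
    deriv (fun τ => deriv (fun τ' => f (γ τ')) τ) t = fderiv ℝ (fderiv ℝ f) (γ t) v v := by
  have hnear : ∀ᶠ τ in 𝓝 t, DifferentiableAt ℝ f (γ τ) :=
    (hγ t).continuousAt.eventually ((hf.eventually (by simp)).mono
      fun y hy => hy.differentiableAt (by norm_num))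
  have hfirst : (fun τ => deriv (fun τ' => f (γ τ')) τ) =ᶠ[𝓝 t] fun τ => fderiv ℝ f (γ τ) v :=
    hnear.mono fun τ hτ => (hτ.hasFDerivAt.comp_hasDerivAt τ (hγ τ)).deriv
  have hD2 : DifferentiableAt ℝ (fderiv ℝ f) (γ t) :=
    (hf.fderiv_right (m := 1) (by norm_num)).differentiableAt (by norm_num)
  rw [hfirst.deriv_eq]
  exact ((hD2.hasFDerivAt.comp_hasDerivAt t (hγ t)).clm_apply
    (hasDerivAt_const t v)).deriv.trans (by simp)

theorem fderivWithin_apply_eq_of_fderiv_fderiv_eq_zero {f : E → F} {s : Set E}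
    (hs : UniqueDiffOn ℝ s) (hf : ContDiffOn ℝ 1 f s) {p q w : E} (hseg : segment ℝ p q ⊆ s)
    (hint : openSegment ℝ p q ⊆ interior s)
    (hf2 : ∀ y ∈ openSegment ℝ p q, ContDiffAt ℝ 2 f y)
    (hzero : ∀ y ∈ openSegment ℝ p q, fderiv ℝ (fderiv ℝ f) y (q - p) w = 0) :
    fderivWithin ℝ f s p w = fderivWithin ℝ f s q w := by
  let γ : ℝ → E := AffineMap.lineMap p q
  have hγ : ∀ τ, HasDerivAt γ (q - p) τ := fun τ => AffineMap.hasDerivAt_lineMap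
  have hcont : ContinuousOn (fun τ => fderivWithin ℝ f s (γ τ) w) (Icc 0 1) :=
    ((hf.continuousOn_fderivWithin hs le_rfl).clm_apply continuousOn_const).comp
      AffineMap.lineMap_continuous.continuousOn fun τ hτ =>
        hseg (segment_eq_image_lineMap ℝ p q ▸ mem_image_of_mem _ hτ)
  have hderiv : ∀ τ ∈ Ioo (0 : ℝ) 1,
      HasDerivAt (fun τ => fderivWithin ℝ f s (γ τ) w) 0 τ := by
    intro τ hτ
    have hy : γ τ ∈ openSegment ℝ p q := by
      rw [openSegment_eq_image_lineMap]; exact mem_image_of_mem _ hτ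
    have hnear : (fun τ => fderiv ℝ f (γ τ) w) =ᶠ[𝓝 τ] fun τ => fderivWithin ℝ f s (γ τ) w :=
      Filter.mem_of_superset ((hγ τ).continuousAt.preimage_mem_nhds
        (isOpen_interior.mem_nhds (hint hy))) fun σ hσ =>
          DFunLike.congr_fun (fderivWithin_of_mem_nhds (mem_interior_iff_mem_nhds.1 hσ)).symm w
    have hD2 : DifferentiableAt ℝ (fderiv ℝ f) (γ τ) :=
      ((hf2 _ hy).fderiv_right (m := 1) (by norm_num)).differentiableAt (by norm_num)
    rw [← hzero _ hy]
    simpa using ((hD2.hasFDerivAt.comp_hasDerivAt τ (hγ τ)).clm_apply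
      (hasDerivAt_const τ w)).congr_of_eventuallyEq hnear.symm
  simpa [γ] using eq_of_hasDerivAt_zero_of_continuousOn_Icc zero_lt_one hcont hderiv

end

namespace WaveEquation

variable {F : Type*} [NormedAddCommGroup F] [NormedSpace ℝ F]

def SolvesOn (f : ℝ × ℝ → F) (s : Set (ℝ × ℝ)) : Prop :=
  ∀ p ∈ s, deriv (fun t => deriv (fun t' => f (t', p.2)) t) p.1 =
    deriv (fun x => deriv (fun x' => f (p.1, x')) x) p.2

theorem fderiv_fderiv_apply_characteristic_eq_zero {f : ℝ × ℝ → F} {y : ℝ × ℝ}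
    (hf : ContDiffAt ℝ 2 f y)
    (hwave : deriv (fun t => deriv (fun t' => f (t', y.2)) t) y.1 =
      deriv (fun x => deriv (fun x' => f (y.1, x')) x) y.2)
    {e : ℝ} (he : e ^ 2 = 1) (c : ℝ) : fderiv ℝ (fderiv ℝ f) y (c, -(e * c)) (1, e) = 0 := by
  set B := fderiv ℝ (fderiv ℝ f) y
  have htt : deriv (fun t => deriv (fun t' => f (t', y.2)) t) y.1 = B (1, 0) (1, 0) :=
    deriv_deriv_comp_eq_fderiv_fderiv (γ := fun t => (t, y.2))
      (fun τ => (hasDerivAt_id τ).prodMk (hasDerivAt_const τ y.2)) hf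
  have hxx : deriv (fun x => deriv (fun x' => f (y.1, x')) x) y.2 = B (0, 1) (0, 1) :=
    deriv_deriv_comp_eq_fderiv_fderiv (γ := fun x => (y.1, x))
      (fun τ => (hasDerivAt_const τ y.1).prodMk (hasDerivAt_id τ)) hf
  have hsymm : B (0, 1) (1, 0) = B (1, 0) (0, 1) := hf.isSymmSndFDerivAt (by simp) _ _
  have hv : ((c, -(e * c)) : ℝ × ℝ) =
      c • ((1 : ℝ), (0 : ℝ)) + (-(e * c)) • ((0 : ℝ), (1 : ℝ)) := by
    ext <;> simp
  have hw : ((1, e) : ℝ × ℝ) = ((1 : ℝ), (0 : ℝ)) + e • ((0 : ℝ), (1 : ℝ)) := by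
    ext <;> simp
  rw [htt, hxx] at hwave
  rw [hv, hw]
  simp only [map_add, map_smul, add_apply, smul_apply]
  rw [hsymm, hwave]
  linear_combination (norm := module) he • (-c • B (0, 1) (0, 1))

variable {T L : ℝ} {f : ℝ × ℝ → F}

theorem fderivWithin_apply_eq_of_characteristic (hT : 0 < T) (hL : 0 < L)
    (hf1 : ContDiffOn ℝ 1 f (Icc 0 T ×ˢ Icc 0 L))
    (hf2 : ContDiffOn ℝ 2 f (Ioo 0 T ×ˢ Ioo 0 L)) (hwave : SolvesOn f (Ioo 0 T ×ˢ Ioo 0 L))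
    {e : ℝ} (he : e ^ 2 = 1) {p q : ℝ × ℝ} (hp : p ∈ Icc 0 T ×ˢ Icc 0 L)
    (hq : q ∈ Icc 0 T ×ˢ Icc 0 L) (hpq : p.1 + e * p.2 = q.1 + e * q.2) :
    fderivWithin ℝ f (Icc 0 T ×ˢ Icc 0 L) p (1, e) =
      fderivWithin ℝ f (Icc 0 T ×ˢ Icc 0 L) q (1, e) := by
  rcases eq_or_ne p q with rfl | hne
  · rfl
  have hslope : q.2 - p.2 = -(e * (q.1 - p.1)) := by
    linear_combination (-e) * hpq + (p.2 - q.2) * he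
  have h₁ : p.1 ≠ q.1 := fun h =>
    hne (Prod.ext h (by rw [h, sub_self, mul_zero] at hslope; linarith))
  have h₂ : p.2 ≠ q.2 := fun h => h₁ (by rw [h] at hpq; linarith)
  have hint : openSegment ℝ p q ⊆ Ioo 0 T ×ˢ Ioo 0 L :=
    (Prod.openSegment_subset p q).trans (prod_mono
      (openSegment_subset_Ioo_of_ne hp.1 hq.1 h₁) (openSegment_subset_Ioo_of_ne hp.2 hq.2 h₂))
  have hC2 : ∀ y ∈ openSegment ℝ p q, ContDiffAt ℝ 2 f y := fun y hy =>
    hf2.contDiffAt ((isOpen_Ioo.prod isOpen_Ioo).mem_nhds (hint hy))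
  refine fderivWithin_apply_eq_of_fderiv_fderiv_eq_zero
    ((uniqueDiffOn_Icc hT).prod (uniqueDiffOn_Icc hL)) hf1
    (((convex_Icc 0 T).prod (convex_Icc 0 L)).segment_subset hp hq)
    (by rwa [interior_prod_eq, interior_Icc, interior_Icc]) hC2 fun y hy => ?_
  rw [show q - p = (q.1 - p.1, -(e * (q.1 - p.1))) from Prod.ext rfl hslope]
  exact fderiv_fderiv_apply_characteristic_eq_zero (hC2 y hy) (hwave y (hint hy)) he _

theorem fderivWithin_apply_one_zero_eq_zero (hT : 0 < T) (hL : 0 < L)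
    (hf1 : ContDiffOn ℝ 1 f (Icc 0 T ×ˢ Icc 0 L))
    (hbdry : ∀ p ∈ frontier (Ioo 0 T ×ˢ Ioo 0 L), f p = 0) {p : ℝ × ℝ}
    (hp : p ∈ Icc 0 T ×ˢ Icc 0 L) (hedge : p.2 = 0 ∨ p.2 = L) :
    fderivWithin ℝ f (Icc 0 T ×ˢ Icc 0 L) p (1, 0) = 0 := by
  refine HasFDerivWithinAt.apply_eq_zero_of_eqOn_zero (γ := fun t => (t, p.2))
    (hf1.differentiableOn one_ne_zero p hp).hasFDerivWithinAt
    ((hasDerivAt_id p.1).prodMk (hasDerivAt_const p.1 p.2)).hasDerivWithinAt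
    (fun t ht => ⟨ht, hp.2⟩) (uniqueDiffOn_Icc hT p.1 hp.1) hp.1 fun t ht => ?_
  rw [frontier_Ioo_prod_Ioo hT hL] at hbdry
  refine hbdry _ ⟨⟨ht, hp.2⟩, fun hU => ?_⟩
  rcases hedge with h | h <;> linarith [h ▸ hU.2.1, h ▸ hU.2.2]

theorem fderivWithin_apply_zero_one_eq_zero (hT : 0 < T) (hL : 0 < L)
    (hf1 : ContDiffOn ℝ 1 f (Icc 0 T ×ˢ Icc 0 L))
    (hbdry : ∀ p ∈ frontier (Ioo 0 T ×ˢ Ioo 0 L), f p = 0) {p : ℝ × ℝ}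
    (hp : p ∈ Icc 0 T ×ˢ Icc 0 L) (hedge : p.1 = 0 ∨ p.1 = T) :
    fderivWithin ℝ f (Icc 0 T ×ˢ Icc 0 L) p (0, 1) = 0 := by
  refine HasFDerivWithinAt.apply_eq_zero_of_eqOn_zero (γ := fun x => (p.1, x))
    (hf1.differentiableOn one_ne_zero p hp).hasFDerivWithinAt
    ((hasDerivAt_const p.2 p.1).prodMk (hasDerivAt_id p.2)).hasDerivWithinAt
    (fun x hx => ⟨hp.1, hx⟩) (uniqueDiffOn_Icc hL p.2 hp.2) hp.2 fun x hx => ?_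
  rw [frontier_Ioo_prod_Ioo hT hL] at hbdry
  refine hbdry _ ⟨⟨hp.1, hx⟩, fun hU => ?_⟩
  rcases hedge with h | h <;> linarith [h ▸ hU.1.1, h ▸ hU.1.2]

theorem norm_fderivWithin_apply_one_one_eq_of_mem_frontier (hT : 0 < T) (hL : 0 < L)
    (hf1 : ContDiffOn ℝ 1 f (Icc 0 T ×ˢ Icc 0 L))
    (hbdry : ∀ p ∈ frontier (Ioo 0 T ×ˢ Ioo 0 L), f p = 0) {p : ℝ × ℝ}
    (hp : p ∈ frontier (Ioo 0 T ×ˢ Ioo 0 L)) :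
    ‖fderivWithin ℝ f (Icc 0 T ×ˢ Icc 0 L) p (1, 1)‖ =
      ‖fderivWithin ℝ f (Icc 0 T ×ˢ Icc 0 L) p (1, -1)‖ := by
  rw [frontier_Ioo_prod_Ioo hT hL] at hp
  obtain ⟨hpK, hpU⟩ := hp
  refine ContinuousLinearMap.norm_apply_one_one_eq_norm_apply_one_neg_one _ ?_
  by_cases h₁ : p.1 ∈ Ioo 0 T
  · have h₂ : p.2 = 0 ∨ p.2 = L := by
      by_contra! h
      exact hpU ⟨h₁, lt_of_le_of_ne hpK.2.1 h.1.symm, lt_of_le_of_ne hpK.2.2 h.2⟩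
    exact Or.inl (fderivWithin_apply_one_zero_eq_zero hT hL hf1 hbdry hpK h₂)
  · have h₁' : p.1 = 0 ∨ p.1 = T := by
      by_contra! h
      exact h₁ ⟨lt_of_le_of_ne hpK.1.1 h.1.symm, lt_of_le_of_ne hpK.1.2 h.2⟩
    exact Or.inr (fderivWithin_apply_zero_one_eq_zero hT hL hf1 hbdry hpK h₁')

/-- `Φ(s)`: the value of `(∂ₜ + ∂ₓ) f` on the characteristic `t + x = s`, read off at its point
with the largest `t`. -/
noncomputable def riemannInvariant (T L : ℝ) (f : ℝ × ℝ → F) (s : ℝ) : F :=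
  fderivWithin ℝ f (Icc 0 T ×ˢ Icc 0 L) (min s T, s - min s T) (1, 1)

theorem min_prod_sub_min_mem (hT : 0 ≤ T) (hL : 0 ≤ L) {s : ℝ} (hs : s ∈ Icc 0 (T + L)) :
    (min s T, s - min s T) ∈ Icc 0 T ×ˢ Icc 0 L := by
  obtain ⟨hs₀, hs₁⟩ := hs
  rcases le_total s T with h | h
  · simp only [min_eq_left h, sub_self]; exact ⟨⟨hs₀, h⟩, le_rfl, hL⟩
  · simp only [min_eq_right h]; exact ⟨⟨hT, le_rfl⟩, sub_nonneg.2 h, by linarith⟩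

theorem fderivWithin_apply_one_one_eq_riemannInvariant (hT : 0 < T) (hL : 0 < L)
    (hf1 : ContDiffOn ℝ 1 f (Icc 0 T ×ˢ Icc 0 L))
    (hf2 : ContDiffOn ℝ 2 f (Ioo 0 T ×ˢ Ioo 0 L)) (hwave : SolvesOn f (Ioo 0 T ×ˢ Ioo 0 L))
    {p : ℝ × ℝ} (hp : p ∈ Icc 0 T ×ˢ Icc 0 L) :
    fderivWithin ℝ f (Icc 0 T ×ˢ Icc 0 L) p (1, 1) = riemannInvariant T L f (p.1 + p.2) :=
  fderivWithin_apply_eq_of_characteristic hT hL hf1 hf2 hwave (one_pow 2) hp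
    (min_prod_sub_min_mem hT.le hL.le ⟨add_nonneg hp.1.1 hp.2.1, add_le_add hp.1.2 hp.2.2⟩)
    (by ring)

theorem continuousOn_riemannInvariant (hT : 0 < T) (hL : 0 < L)
    (hf1 : ContDiffOn ℝ 1 f (Icc 0 T ×ˢ Icc 0 L)) :
    ContinuousOn (riemannInvariant T L f) (Icc 0 (T + L)) :=
  ((hf1.continuousOn_fderivWithin ((uniqueDiffOn_Icc hT).prod (uniqueDiffOn_Icc hL))
    le_rfl).clm_apply continuousOn_const).comp (by fun_prop)
    fun _ hs => min_prod_sub_min_mem hT.le hL.le hs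

theorem riemannInvariant_zero (hT : 0 < T) (hL : 0 < L)
    (hf1 : ContDiffOn ℝ 1 f (Icc 0 T ×ˢ Icc 0 L))
    (hbdry : ∀ p ∈ frontier (Ioo 0 T ×ˢ Ioo 0 L), f p = 0) :
    riemannInvariant T L f 0 = 0 := by
  have hcorner : ((0 : ℝ), (0 : ℝ)) ∈ Icc 0 T ×ˢ Icc 0 L := ⟨⟨le_rfl, hT.le⟩, le_rfl, hL.le⟩
  rw [riemannInvariant, min_eq_left hT.le, sub_zero,
    show ((1 : ℝ), (1 : ℝ)) = (1, 0) + (0, 1) by simp, map_add,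
    fderivWithin_apply_one_zero_eq_zero hT hL hf1 hbdry hcorner (Or.inl rfl),
    fderivWithin_apply_zero_one_eq_zero hT hL hf1 hbdry hcorner (Or.inl rfl), add_zero]

theorem exists_mem_frontier_sub_eq (hT : 0 < T) (hL : 0 < L) {u : ℝ} (hu : u ∈ Icc (-L) T) :
    ∃ q ∈ frontier (Ioo 0 T ×ˢ Ioo 0 L), q.1 - q.2 = u ∧ q.1 + q.2 = |u| := by
  rw [frontier_Ioo_prod_Ioo hT hL]
  rcases le_total 0 u with h | h
  · exact ⟨(u, 0), ⟨⟨⟨h, hu.2⟩, le_rfl, hL.le⟩, fun hU => hU.2.1.false⟩, by simp,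
      by simp [abs_of_nonneg h]⟩
  · exact ⟨(0, -u), ⟨⟨⟨le_rfl, hT.le⟩, by linarith, by linarith [hu.1]⟩,
      fun hU => hU.1.1.false⟩, by simp, by simp [abs_of_nonpos h]⟩

theorem norm_riemannInvariant_add_eq_abs_sub (hT : 0 < T) (hL : 0 < L)
    (hf1 : ContDiffOn ℝ 1 f (Icc 0 T ×ˢ Icc 0 L))
    (hf2 : ContDiffOn ℝ 2 f (Ioo 0 T ×ˢ Ioo 0 L)) (hwave : SolvesOn f (Ioo 0 T ×ˢ Ioo 0 L))
    (hbdry : ∀ p ∈ frontier (Ioo 0 T ×ˢ Ioo 0 L), f p = 0) {p : ℝ × ℝ}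
    (hp : p ∈ frontier (Ioo 0 T ×ˢ Ioo 0 L)) :
    ‖riemannInvariant T L f (p.1 + p.2)‖ = ‖riemannInvariant T L f |p.1 - p.2|‖ := by
  have hpK : p ∈ Icc 0 T ×ˢ Icc 0 L := (frontier_Ioo_prod_Ioo hT hL ▸ hp).1
  obtain ⟨q, hq, hsub, hadd⟩ := exists_mem_frontier_sub_eq hT hL (u := p.1 - p.2)
    ⟨by linarith [hpK.1.1, hpK.2.2], by linarith [hpK.1.2, hpK.2.1]⟩
  have hqK : q ∈ Icc 0 T ×ˢ Icc 0 L := (frontier_Ioo_prod_Ioo hT hL ▸ hq).1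
  rw [← hadd, ← fderivWithin_apply_one_one_eq_riemannInvariant hT hL hf1 hf2 hwave hpK,
    ← fderivWithin_apply_one_one_eq_riemannInvariant hT hL hf1 hf2 hwave hqK,
    norm_fderivWithin_apply_one_one_eq_of_mem_frontier hT hL hf1 hbdry hp,
    norm_fderivWithin_apply_one_one_eq_of_mem_frontier hT hL hf1 hbdry hq,
    fderivWithin_apply_eq_of_characteristic hT hL hf1 hf2 hwave (by norm_num) hpK hqK
      (by linarith)]

theorem riemannInvariant_eq_zero (hT : 0 < T) (hL : 0 < L) (hirr : Irrational (T / L))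
    (hf1 : ContDiffOn ℝ 1 f (Icc 0 T ×ˢ Icc 0 L))
    (hf2 : ContDiffOn ℝ 2 f (Ioo 0 T ×ˢ Ioo 0 L)) (hwave : SolvesOn f (Ioo 0 T ×ˢ Ioo 0 L))
    (hbdry : ∀ p ∈ frontier (Ioo 0 T ×ˢ Ioo 0 L), f p = 0) {s : ℝ}
    (hs : s ∈ Icc 0 (T + L)) : riemannInvariant T L f s = 0 := by
  set n : ℝ → ℝ := fun s => ‖riemannInvariant T L f s‖
  have hright : ∀ s ∈ Icc 0 L, n (T + s) = n |T - s| := fun s hs =>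
    norm_riemannInvariant_add_eq_abs_sub (p := (T, s)) hT hL hf1 hf2 hwave hbdry
      (frontier_Ioo_prod_Ioo hT hL ▸ ⟨⟨⟨hT.le, le_rfl⟩, hs⟩, fun hU => hU.1.2.false⟩)
  have htop : ∀ s ∈ Icc 0 T, n (L + s) = n |L - s| := fun s hs => by
    simpa only [add_comm, abs_sub_comm] using
      norm_riemannInvariant_add_eq_abs_sub (p := (s, L)) hT hL hf1 hf2 hwave hbdry
        (frontier_Ioo_prod_Ioo hT hL ▸ ⟨⟨hs, hL.le, le_rfl⟩, fun hU => hU.2.2.false⟩)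
  have hper₁ := periodic_comp_norm_addCircle hT.le hL.le (by positivity) hright htop
  have hper₂ := periodic_comp_norm_addCircle hL.le hT.le (by positivity) htop hright
  rw [add_comm L T] at hper₂
  have hP : (0 : ℝ) < 2 * (T + L) := by positivity
  have hcont : Continuous fun s : ℝ => n ‖(s : AddCircle (2 * (T + L)))‖ := by
    refine (continuousOn_riemannInvariant hT hL hf1).norm.comp_continuous
      (continuous_norm.comp (AddCircle.continuous_mk' _)) fun s => ⟨norm_nonneg _, ?_⟩
    have := AddCircle.norm_le_half_period (2 * (T + L))
      (x := (s : AddCircle (2 * (T + L)))) hP.ne'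
    rwa [abs_of_pos hP, mul_div_cancel_left₀ _ two_ne_zero] at this
  have hdense : Dense (AddSubgroup.closure {2 * T, 2 * L} : Set ℝ) := by
    rwa [dense_addSubgroupClosure_pair_iff, mul_div_mul_left _ _ two_ne_zero]
  have hconst := hcont.eq_of_periodic_of_dense_closure
    (fun a ha => by rcases ha with rfl | rfl; exacts [hper₁, hper₂]) hdense s 0
  have hnorm : ‖(s : AddCircle (2 * (T + L)))‖ = |s| :=
    (AddCircle.norm_coe_eq_abs_iff _ hP.ne').2 (by
      rw [abs_of_pos hP, abs_of_nonneg hs.1]; linarith [hs.2])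
  simp only [n, hnorm, abs_of_nonneg hs.1, AddCircle.coe_zero, norm_zero,
    riemannInvariant_zero hT hL hf1 hbdry] at hconst
  exact norm_eq_zero.1 hconst

theorem fderivWithin_eq_zero (hT : 0 < T) (hL : 0 < L) (hirr : Irrational (T / L))
    (hf1 : ContDiffOn ℝ 1 f (Icc 0 T ×ˢ Icc 0 L))
    (hf2 : ContDiffOn ℝ 2 f (Ioo 0 T ×ˢ Ioo 0 L)) (hwave : SolvesOn f (Ioo 0 T ×ˢ Ioo 0 L))
    (hbdry : ∀ p ∈ frontier (Ioo 0 T ×ˢ Ioo 0 L), f p = 0) {p : ℝ × ℝ}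
    (hp : p ∈ Icc 0 T ×ˢ Icc 0 L) : fderivWithin ℝ f (Icc 0 T ×ˢ Icc 0 L) p = 0 := by
  have hsum : ∀ q ∈ Icc 0 T ×ˢ Icc 0 L, fderivWithin ℝ f (Icc 0 T ×ˢ Icc 0 L) q (1, 1) = 0 :=
    fun q hq => by
      rw [fderivWithin_apply_one_one_eq_riemannInvariant hT hL hf1 hf2 hwave hq,
        riemannInvariant_eq_zero hT hL hirr hf1 hf2 hwave hbdry
          ⟨add_nonneg hq.1.1 hq.2.1, add_le_add hq.1.2 hq.2.2⟩]
  obtain ⟨q, hq, hsub, -⟩ := exists_mem_frontier_sub_eq hT hL (u := p.1 - p.2)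
    ⟨by linarith [hp.1.1, hp.2.2], by linarith [hp.1.2, hp.2.1]⟩
  have hqK : q ∈ Icc 0 T ×ˢ Icc 0 L := (frontier_Ioo_prod_Ioo hT hL ▸ hq).1
  refine ContinuousLinearMap.eq_zero_of_apply_one_one_of_apply_one_neg_one (hsum p hp) ?_
  rw [fderivWithin_apply_eq_of_characteristic hT hL hf1 hf2 hwave (by norm_num) hp hqK
      (by linarith), ← norm_eq_zero,
    ← norm_fderivWithin_apply_one_one_eq_of_mem_frontier hT hL hf1 hbdry hq, hsum q hqK,
    norm_zero]

end WaveEquation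

/-- Uniqueness for the homogeneous Dirichlet problem for the 1-d wave equation on a
rectangle `(0,T) × (0,L)` with irrational side ratio `T/L`: a solution of class
`C²` inside and `C¹` up to the boundary vanishing on the boundary vanishes identically. -/
theorem wave_dirichlet_uniqueness (T L : ℝ) (hT : 0 < T) (hL : 0 < L)
    (hirr : Irrational (T / L)) (f : ℝ × ℝ → ℂ)
    (hf2 : ContDiffOn ℝ 2 f (Ioo 0 T ×ˢ Ioo 0 L))
    (hf1 : ContDiffOn ℝ 1 f (Icc 0 T ×ˢ Icc 0 L))
    (hwave : ∀ p ∈ Ioo 0 T ×ˢ Ioo 0 L,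
      deriv (fun t => deriv (fun t' => f (t', p.2)) t) p.1 =
      deriv (fun x => deriv (fun x' => f (p.1, x')) x) p.2)
    (hbdry : ∀ p ∈ frontier (Ioo 0 T ×ˢ Ioo 0 L), f p = 0) :
    ∀ p ∈ Icc 0 T ×ˢ Icc 0 L, f p = 0 := by
  have hcorner : ((0 : ℝ), (0 : ℝ)) ∈ Icc 0 T ×ˢ Icc 0 L := ⟨⟨le_rfl, hT.le⟩, le_rfl, hL.le⟩
  intro p hp
  rw [((convex_Icc 0 T).prod (convex_Icc 0 L)).is_const_of_fderivWithin_eq_zero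
    (hf1.differentiableOn one_ne_zero)
    (fun q hq => WaveEquation.fderivWithin_eq_zero hT hL hirr hf1 hf2 hwave hbdry hq) hp hcorner]
  exact hbdry _ (frontier_Ioo_prod_Ioo hT hL ▸ ⟨hcorner, fun hU => hU.1.1.false⟩)
end
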